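/- The first-order theory R of Robinson–Tarski–Mostowski is locally finitely satisfiable: every finite subset of its axioms has a finite model. -/

import Mathlib

/-!
Truncate ℕ at `N`: take the universe `{0, …, N}`, compute `S`, `+` and `×` in ℕ and
clamp the result to `N`, and let `≤` be the usual order. Clamping `n ↦ min n N` commutes
with `S`, `+` and `×`, so each numeral `n̄` denotes `min n N` and every addition and
multiplication axiom holds in every truncation. The order axioms hold as well: `x ≤ n̄`
makes `x` the value of the numeral `x̄` with `x ≤ n`, and the order is total. Only
`n̄ ≠ m̄` needs `N ≥ n, m`, so a finite set of axioms of R holds in the truncation at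
any `N` beyond the numerals of its inequations.
-/

open FirstOrder FirstOrder.Language

/-- Function symbols of the language of arithmetic: 0, S, +, ×. -/
inductive ArithFunc : ℕ → Type
  | zero : ArithFunc 0
  | succ : ArithFunc 1
  | add : ArithFunc 2
  | mul : ArithFunc 2

/-- Relation symbols of the language of arithmetic: ≤. -/
inductive ArithRel : ℕ → Type
  | le : ArithRel 2

/-- The language of arithmetic {0, S, +, ×, ≤}. -/
def LA : FirstOrder.Language := ⟨ArithFunc, ArithRel⟩

/-- The numeral n̄ = Sⁿ(0). -/
def numTerm {α : Type} : ℕ → LA.Term α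
  | 0 => Term.func ArithFunc.zero ![]
  | n + 1 => Term.func ArithFunc.succ ![numTerm n]

/-- The term t + s. -/
def plusT {α : Type} (t s : LA.Term α) : LA.Term α := Term.func ArithFunc.add ![t, s]

/-- The term t × s. -/
def timesT {α : Type} (t s : LA.Term α) : LA.Term α := Term.func ArithFunc.mul ![t, s]

/-- The formula t ≤ s. -/
def leF {α : Type} {n : ℕ} (t s : LA.Term (α ⊕ Fin n)) : LA.BoundedFormula α n :=
  Relations.boundedFormula₂ ArithRel.le t s

/-- The disjunction x = 0̄ ∨ x = 1̄ ∨ … ∨ x = n̄ (for the bound variable x). -/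
def disjEq : ℕ → LA.BoundedFormula Empty 1
  | 0 => Term.bdEqual (&0) (numTerm 0)
  | n + 1 => disjEq n ⊔ Term.bdEqual (&0) (numTerm (n + 1))

/-- The theory R of Robinson–Tarski–Mostowski: for all n, m ∈ ℕ,
n̄ + m̄ = (n+m)‾, n̄ × m̄ = (n·m)‾, n̄ ≠ m̄ for n ≠ m,
∀x (x ≤ n̄ → x = 0̄ ∨ … ∨ x = n̄), and ∀x (x ≤ n̄ ∨ n̄ ≤ x). -/
def TheoryR : LA.Theory :=
  {σ | ∃ n m : ℕ, σ = Term.bdEqual (plusT (numTerm n) (numTerm m)) (numTerm (n + m))} ∪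
  {σ | ∃ n m : ℕ, σ = Term.bdEqual (timesT (numTerm n) (numTerm m)) (numTerm (n * m))} ∪
  {σ | ∃ n m : ℕ, n ≠ m ∧ σ = ∼(Term.bdEqual (numTerm n) (numTerm m))} ∪
  {σ | ∃ n : ℕ, σ = ∀' (leF (&0) (numTerm n) ⟹ disjEq n)} ∪
  {σ | ∃ n : ℕ, σ = ∀' (leF (&0) (numTerm n) ⊔ leF (numTerm n) (&0))}

open Filter

section ArithStructure

variable {M : Type*} [LA.Structure M]

theorem realize_plusT {α : Type} (v : α → M) (t s : LA.Term α) :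
    (plusT t s).realize v = Structure.funMap (L := LA) ArithFunc.add ![t.realize v, s.realize v] :=
  Term.realize_functions_apply₂

theorem realize_timesT {α : Type} (v : α → M) (t s : LA.Term α) :
    (timesT t s).realize v = Structure.funMap (L := LA) ArithFunc.mul ![t.realize v, s.realize v] :=
  Term.realize_functions_apply₂

theorem realize_leF {α : Type} {n : ℕ} (v : α → M) (xs : Fin n → M)
    (t s : LA.Term (α ⊕ Fin n)) :
    (leF t s).Realize v xs ↔ Structure.RelMap (L := LA) ArithRel.le
      ![t.realize (Sum.elim v xs), s.realize (Sum.elim v xs)] :=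
  BoundedFormula.realize_rel₂

theorem realize_disjEq (v : Empty → M) (xs : Fin 1 → M) (n : ℕ) :
    (disjEq n).Realize v xs ↔ ∃ i ≤ n, xs 0 = (numTerm i).realize (Sum.elim v xs) := by
  induction n with
  | zero => simp [disjEq]
  | succ n ih =>
    simp only [disjEq, BoundedFormula.realize_sup, ih, BoundedFormula.realize_bdEqual,
      Function.comp_apply, Term.realize_var, Sum.elim_inr, Nat.le_succ_iff, or_and_right,
      exists_or, exists_eq_left]

end ArithStructure

theorem Fin.clamp_add_clamp (a b N : ℕ) :
    Fin.clamp ((Fin.clamp a N : ℕ) + Fin.clamp b N) N = Fin.clamp (a + b) N := by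
  ext
  simp only [Fin.coe_clamp]
  omega

theorem Fin.clamp_mul_clamp (a b N : ℕ) :
    Fin.clamp ((Fin.clamp a N : ℕ) * Fin.clamp b N) N = Fin.clamp (a * b) N := by
  ext
  simp only [Fin.coe_clamp]
  by_cases hab : a ≤ N ∧ b ≤ N
  · rw [min_eq_left hab.1, min_eq_left hab.2]
  rcases Nat.eq_zero_or_pos a with rfl | ha0
  · simp
  rcases Nat.eq_zero_or_pos b with rfl | hb0
  · simp
  rcases Nat.eq_zero_or_pos N with rfl | hN0
  · simp
  have hN : N ≤ min a N * min b N := by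
    rcases not_and_or.1 hab with ha | hb
    · rw [min_eq_right (by omega : N ≤ a)]
      exact Nat.le_mul_of_pos_right N (by omega)
    · rw [min_eq_right (by omega : N ≤ b)]
      exact Nat.le_mul_of_pos_left N (by omega)
  have hN' : N ≤ a * b := hN.trans (Nat.mul_le_mul (min_le_left a N) (min_le_left b N))
  rw [min_eq_right hN, min_eq_right hN']

instance clampStructure (N : ℕ) : LA.Structure (Fin (N + 1)) where
  funMap
    | .zero, _ => 0
    | .succ, v => Fin.clamp (v 0 + 1) N
    | .add, v => Fin.clamp (v 0 + v 1) N
    | .mul, v => Fin.clamp (v 0 * v 1) N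
  RelMap
    | .le, v => v 0 ≤ v 1

variable {N : ℕ}

theorem clamp_relMap_le (a b : Fin (N + 1)) :
    Structure.RelMap (L := LA) ArithRel.le ![a, b] ↔ a ≤ b :=
  Iff.rfl

theorem clamp_realize_numTerm {α : Type} (v : α → Fin (N + 1)) (k : ℕ) :
    (numTerm k).realize v = Fin.clamp k N := by
  induction k with
  | zero => exact Fin.ext (Nat.zero_min N).symm
  | succ k ih =>
    change Fin.clamp ((numTerm k).realize v + 1) N = _
    rw [ih]
    ext
    simp only [Fin.coe_clamp]
    omega

theorem clamp_models_addAxiom (n m : ℕ) :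
    Fin (N + 1) ⊨
      (Term.bdEqual (plusT (numTerm n) (numTerm m)) (numTerm (n + m)) : LA.Sentence) := by
  simp only [Sentence.Realize, Formula.Realize, BoundedFormula.realize_bdEqual, realize_plusT,
    clamp_realize_numTerm]
  exact Fin.clamp_add_clamp n m N

theorem clamp_models_mulAxiom (n m : ℕ) :
    Fin (N + 1) ⊨
      (Term.bdEqual (timesT (numTerm n) (numTerm m)) (numTerm (n * m)) : LA.Sentence) := by
  simp only [Sentence.Realize, Formula.Realize, BoundedFormula.realize_bdEqual, realize_timesT,
    clamp_realize_numTerm]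
  exact Fin.clamp_mul_clamp n m N

theorem clamp_models_neAxiom {n m : ℕ} (hn : n ≤ N) (hm : m ≤ N) (hnm : n ≠ m) :
    Fin (N + 1) ⊨ (∼(Term.bdEqual (numTerm n) (numTerm m)) : LA.Sentence) := by
  simp only [Sentence.Realize, Formula.Realize, BoundedFormula.realize_not,
    BoundedFormula.realize_bdEqual, clamp_realize_numTerm, Fin.ext_iff, Fin.coe_clamp]
  omega

theorem clamp_models_leAxiom (n : ℕ) :
    Fin (N + 1) ⊨ (∀' (leF (&0) (numTerm n) ⟹ disjEq n) : LA.Sentence) := by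
  simp only [Sentence.Realize, Formula.Realize, BoundedFormula.realize_all,
    BoundedFormula.realize_imp, realize_leF, realize_disjEq, clamp_realize_numTerm,
    clamp_relMap_le, Term.realize_var, Function.comp_apply, Sum.elim_inr, Fin.snoc_zero]
  intro x hx
  refine ⟨x, ?_, ?_⟩ <;>
    simp only [Fin.ext_iff, Fin.le_iff_val_le_val, Fin.coe_clamp] at hx ⊢ <;> omega

theorem clamp_models_totalAxiom (n : ℕ) :
    Fin (N + 1) ⊨ (∀' (leF (&0) (numTerm n) ⊔ leF (numTerm n) (&0)) : LA.Sentence) := by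
  simp only [Sentence.Realize, Formula.Realize, BoundedFormula.realize_all,
    BoundedFormula.realize_sup, realize_leF, clamp_realize_numTerm, clamp_relMap_le]
  exact fun x => le_total _ _

theorem eventually_clamp_models_of_mem_theoryR {σ : LA.Sentence} (hσ : σ ∈ TheoryR) :
    ∀ᶠ N in atTop, Fin (N + 1) ⊨ σ := by
  rcases hσ with
    ((((⟨n, m, rfl⟩ | ⟨n, m, rfl⟩) | ⟨n, m, hnm, rfl⟩) | ⟨n, rfl⟩) | ⟨n, rfl⟩)
  · exact .of_forall fun _ => clamp_models_addAxiom n m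
  · exact .of_forall fun _ => clamp_models_mulAxiom n m
  · filter_upwards [eventually_ge_atTop n, eventually_ge_atTop m] with N hn hm
    exact clamp_models_neAxiom hn hm hnm
  · exact .of_forall fun _ => clamp_models_leAxiom n
  · exact .of_forall fun _ => clamp_models_totalAxiom n

/-- The theory R is locally finitely satisfiable: every finite subset of its axioms
has a finite (nonempty) model. -/
theorem theoryR_locally_finitely_satisfiable :
    ∀ T₀ : LA.Theory, T₀ ⊆ TheoryR → T₀.Finite →
      ∃ (M : Type) (inst : LA.Structure M), Finite M ∧ Nonempty M ∧
        @Theory.Model LA M inst T₀ := by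
  intro T₀ hT₀ hfin
  have hmodels : ∀ᶠ N in atTop, ∀ σ ∈ T₀, Fin (N + 1) ⊨ σ :=
    (eventually_all_finite hfin).2 fun σ hσ => eventually_clamp_models_of_mem_theoryR (hT₀ hσ)
  obtain ⟨N, hN⟩ := hmodels.exists
  exact ⟨Fin (N + 1), inferInstance, inferInstance, ⟨0⟩, (Theory.model_iff T₀).2 hN⟩
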